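/- arXiv:2602.18246 — 3 statements merged into one kernel-verified Lean document; each statement's English description precedes it below -/
import Mathlib

section
/- For every finite simple graph G, the chromatic index of G is at most Δ(G) + 1, where Δ(G) denotes the maximum degree of G (Vizing's theorem). -/
/-!
Induct on the edges: given a colouring of `G - xy` with more colours than any degree, so that
every vertex misses some colour, extend it to `xy`. Take a maximal fan `y = f 0, f 1, …, f N` at
`x`, in which the colour of `x (f (i + 1))` is missing at `f i`, and a colour `δ` missing at
`f N`. If `δ` is missing at `x` too, rotate the fan: `x (f i)` takes the colour of
`x (f (i + 1))` and `x (f N)` gets `δ`. Otherwise maximality forces `δ` onto some `x (f (i + 1))`,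
so `δ` is missing at `f i` as well. For a colour `γ` missing at `x`, the `γδ`-subgraph has maximum
degree two and `x`, `f i`, `f N` have degree at most one in it; counting edges in a component,
these three vertices do not lie in one component. Swapping `γ` and `δ` on the component of `f i`
(if it avoids `x`) or else on that of `f N` makes `γ` missing at the tip of the fan
`f 0, …, f i`, resp. `f 0, …, f N`, without spoiling the fan, which can then be rotated.
-/

open Finset

namespace SimpleGraph

variable {V α : Type*} {G H : SimpleGraph V} {c : Sym2 V → α} {x y z : V} {γ δ ε : α}

/-- Colours are assigned to all of `Sym2 V`; only their values on edges of `G` matter. -/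
def IsProperEdgeColoring (G : SimpleGraph V) (c : Sym2 V → α) : Prop :=
  ∀ ⦃v w w'⦄, G.Adj v w → G.Adj v w' → c s(v, w) = c s(v, w') → w = w'

def IsMissingColor (G : SimpleGraph V) (c : Sym2 V → α) (v : V) (γ : α) : Prop :=
  ∀ ⦃w⦄, G.Adj v w → c s(v, w) ≠ γ

lemma IsProperEdgeColoring.mono (hc : G.IsProperEdgeColoring c) (h : H ≤ G) :
    H.IsProperEdgeColoring c :=
  fun _ _ _ hw hw' ↦ hc (h hw) (h hw')

lemma IsMissingColor.mono {v : V} (hγ : G.IsMissingColor c v γ) (h : H ≤ G) :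
    H.IsMissingColor c v γ :=
  fun _ hw ↦ hγ (h hw)

lemma exists_isMissingColor_of_degree_lt [Fintype α] [Fintype V] [DecidableRel G.Adj]
    (c : Sym2 V → α) {v : V} (h : G.degree v < Fintype.card α) :
    ∃ γ, G.IsMissingColor c v γ := by
  classical
  obtain ⟨γ, -, hγ⟩ := exists_mem_notMem_of_card_lt_card
    (s := (G.neighborFinset v).image fun w ↦ c s(v, w)) (t := univ) (card_image_le.trans_lt h)
  exact ⟨γ, fun w hw hcw ↦ hγ (mem_image.2 ⟨w, (G.mem_neighborFinset v w).2 hw, hcw⟩)⟩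

lemma adj_of_sup_edge_adj {v w : V} (h : (G ⊔ edge x y).Adj v w) (hne : s(v, w) ≠ s(x, y)) :
    G.Adj v w :=
  h.resolve_right fun h' ↦ hne ((adj_edge _ _).1 h').1.symm

lemma IsProperEdgeColoring.update_sup_edge [DecidableEq V] (hc : G.IsProperEdgeColoring c)
    (hx : G.IsMissingColor c x δ) (hy : G.IsMissingColor c y δ) :
    (G ⊔ edge x y).IsProperEdgeColoring (Function.update c s(x, y) δ) := by
  have hmissing : ∀ ⦃v w⦄, s(v, w) = s(x, y) → G.IsMissingColor c v δ := fun v w h ↦ by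
    rcases Sym2.eq_iff.1 h with ⟨rfl, -⟩ | ⟨rfl, -⟩ <;> assumption
  intro v w w' hw hw' heq
  by_cases h : s(v, w) = s(x, y) <;> by_cases h' : s(v, w') = s(x, y)
  · exact Sym2.congr_right.1 (h.trans h'.symm)
  · rw [Function.update_of_ne h', h, Function.update_self] at heq
    exact (hmissing h (adj_of_sup_edge_adj hw' h') heq.symm).elim
  · rw [Function.update_of_ne h, h', Function.update_self] at heq
    exact (hmissing h' (adj_of_sup_edge_adj hw h) heq).elim
  · rw [Function.update_of_ne h, Function.update_of_ne h'] at heq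
    exact hc (adj_of_sup_edge_adj hw h) (adj_of_sup_edge_adj hw' h') heq

lemma isMissingColor_update_sup_edge_iff [DecidableEq V] {v : V} (hvx : v ≠ x) (hvy : v ≠ y) :
    (G ⊔ edge x y).IsMissingColor (Function.update c s(x, y) δ) v γ ↔
      G.IsMissingColor c v γ := by
  have hne : ∀ w, s(v, w) ≠ s(x, y) := fun w h ↦ by
    rcases Sym2.eq_iff.1 h with ⟨rfl, -⟩ | ⟨rfl, -⟩ <;> contradiction
  have hadj : ∀ w, (G ⊔ edge x y).Adj v w ↔ G.Adj v w := fun w ↦ by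
    simp [edge_adj, hvx, hvy]
  simp only [IsMissingColor, hadj, Function.update_of_ne (hne _)]

/-- A fan at `x` for the uncoloured pair `x (f 0)`. -/
structure IsFan (G : SimpleGraph V) (c : Sym2 V → α) (x : V) (f : ℕ → V) (m : ℕ) : Prop where
  injOn : Set.InjOn f (Set.Iic m)
  not_adj_zero : ¬ G.Adj x (f 0)
  adj_succ : ∀ i < m, G.Adj x (f (i + 1))
  isMissingColor : ∀ i < m, G.IsMissingColor c (f i) (c s(x, f (i + 1)))

namespace IsFan

variable {f : ℕ → V} {m : ℕ}

lemma of_le (hF : G.IsFan c x f m) {k : ℕ} (hk : k ≤ m) : G.IsFan c x f k where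
  injOn := hF.injOn.mono (Set.Iic_subset_Iic.2 hk)
  not_adj_zero := hF.not_adj_zero
  adj_succ i hi := hF.adj_succ i (by omega)
  isMissingColor i hi := hF.isMissingColor i (by omega)

lemma apply_ne_apply (hF : G.IsFan c x f m) {i j : ℕ} (hi : i ≤ m) (hj : j ≤ m) (hij : i ≠ j) :
    f i ≠ f j :=
  fun h ↦ hij (hF.injOn (Set.mem_Iic.2 hi) (Set.mem_Iic.2 hj) h)

lemma snoc (hF : G.IsFan c x f m) (hz : G.Adj x z) (hzf : ∀ j ≤ m, f j ≠ z)
    (hmiss : G.IsMissingColor c (f m) (c s(x, z))) :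
    G.IsFan c x (Function.update f (m + 1) z) (m + 1) := by
  have hf : ∀ i ≤ m, Function.update f (m + 1) z i = f i := fun i hi ↦
    Function.update_of_ne (by omega) _ _
  refine ⟨fun i hi j hj h ↦ ?_, by rw [hf 0 (by omega)]; exact hF.not_adj_zero,
    fun i hi ↦ ?_, fun i hi ↦ ?_⟩
  · simp only [Set.mem_Iic] at hi hj
    rcases Nat.lt_or_eq_of_le hi with hi | rfl <;> rcases Nat.lt_or_eq_of_le hj with hj | rfl
    · rw [hf i (by omega), hf j (by omega)] at h
      exact hF.injOn (Set.mem_Iic.2 (by omega)) (Set.mem_Iic.2 (by omega)) h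
    · rw [hf i (by omega), Function.update_self] at h
      exact absurd h (hzf i (by omega))
    · rw [hf j (by omega), Function.update_self] at h
      exact absurd h.symm (hzf j (by omega))
    · rfl
  · rcases Nat.lt_or_eq_of_le (Nat.le_of_lt_succ hi) with hi | rfl
    · rw [hf (i + 1) hi]
      exact hF.adj_succ i hi
    · rwa [Function.update_self]
  · rw [hf i (by omega)]
    rcases Nat.lt_or_eq_of_le (Nat.le_of_lt_succ hi) with hi | rfl
    · rw [hf (i + 1) hi]
      exact hF.isMissingColor i hi
    · rwa [Function.update_self]

lemma shift [DecidableEq V] (hF : G.IsFan c x f (m + 1)) :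
    (G \ edge x (f 1) ⊔ edge x (f 0)).IsFan (Function.update c s(x, f 0) (c s(x, f 1))) x
      (fun i ↦ f (i + 1)) m := by
  have hne : ∀ i ≤ m, f (i + 1) ≠ f 0 := fun i hi ↦
    hF.apply_ne_apply (by omega) (by omega) (by omega)
  have hadj₁ := hF.adj_succ 0 (by omega)
  refine ⟨fun i hi j hj h ↦ ?_, ?_, fun i hi ↦ ?_, fun i hi ↦ ?_⟩
  · rw [Set.mem_Iic] at hi hj
    exact Nat.succ_injective (hF.injOn (Set.mem_Iic.2 (by omega)) (Set.mem_Iic.2 (by omega)) h)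
  · simp [edge_adj, hadj₁.ne, hadj₁.ne', hne 0 (by omega)]
  · have hadj := hF.adj_succ (i + 1) (by omega)
    simp [edge_adj, hadj, hadj.ne, hadj.ne', hne (i + 1) (by omega),
      hF.apply_ne_apply (i := i + 2) (j := 1) (by omega) (by omega) (by omega)]
  · rw [Function.update_of_ne fun h ↦ hne (i + 1) (by omega) (Sym2.congr_right.1 h),
      isMissingColor_update_sup_edge_iff (hF.adj_succ i (by omega)).ne' (hne i (by omega))]
    exact (hF.isMissingColor (i + 1) (by omega)).mono sdiff_le

/-- Rotating the fan: each `x (f i)` takes the colour of `x (f (i + 1))`, and `x (f m)` gets `δ`.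
Each step of the induction is one `shift`. -/
theorem exists_isProperEdgeColoring_sup_edge (hF : G.IsFan c x f m)
    (hc : G.IsProperEdgeColoring c) (hx : G.IsMissingColor c x δ)
    (hm : G.IsMissingColor c (f m) δ) :
    ∃ c' : Sym2 V → α, (G ⊔ edge x (f 0)).IsProperEdgeColoring c' := by
  classical
  induction m generalizing G c f with
  | zero => exact ⟨_, hc.update_sup_edge hx hm⟩
  | succ m ih =>
    have hadj₁ := hF.adj_succ 0 (by omega)
    have hγx : (G \ edge x (f 1)).IsMissingColor c x (c s(x, f 1)) := fun w hw h ↦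
      hw.2 (by simp [edge_adj, hc hw.1 hadj₁ h, hadj₁.ne])
    have hδx : (G \ edge x (f 1) ⊔ edge x (f 0)).IsMissingColor
        (Function.update c s(x, f 0) (c s(x, f 1))) x δ := by
      rintro w (hw | hw)
      · rw [Function.update_of_ne fun h ↦
          hF.not_adj_zero (by rw [← Sym2.congr_right.1 h]; exact hw.1)]
        exact hx hw.1
      · obtain rfl : w = f 0 := by grind
        rw [Function.update_self]
        exact hx hadj₁
    have hδm : (G \ edge x (f 1) ⊔ edge x (f 0)).IsMissingColor
        (Function.update c s(x, f 0) (c s(x, f 1))) (f (m + 1)) δ :=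
      (isMissingColor_update_sup_edge_iff (hF.adj_succ m (by omega)).ne'
        (hF.apply_ne_apply le_rfl (by omega) (by omega))).2 (hm.mono sdiff_le)
    obtain ⟨c', hc'⟩ := ih hF.shift ((hc.mono sdiff_le).update_sup_edge hγx
      ((hF.isMissingColor 0 (by omega)).mono sdiff_le)) hδx hδm
    refine ⟨c', ?_⟩
    rwa [sup_right_comm, sdiff_sup_cancel ((edge_le_iff G).2 (Or.inr hadj₁))] at hc'

end IsFan

theorem exists_maximal_isFan [Fintype V] (c : Sym2 V → α) (hxy : ¬ G.Adj x y) :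
    ∃ f m, G.IsFan c x f m ∧ f 0 = y ∧
      ∀ z, G.Adj x z → G.IsMissingColor c (f m) (c s(x, z)) → ∃ j ≤ m, f j = z := by
  classical
  have hbound : ∀ {f n}, G.IsFan c x f n → n ≤ Fintype.card V := fun {f n} hF ↦ by
    have := card_le_card_of_injOn f (s := range (n + 1)) (t := univ) (fun _ _ ↦ mem_univ _)
      (hF.injOn.mono fun i hi ↦ Set.mem_Iic.2 (Nat.le_of_lt_succ (by simpa using hi)))
    simp only [card_range, card_univ] at this
    omega
  let P n := ∃ f, G.IsFan c x f n ∧ f 0 = y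
  have h0 : P 0 := ⟨fun _ ↦ y, ⟨fun _ _ _ _ _ ↦ by simp_all, hxy, by simp, by simp⟩, rfl⟩
  obtain ⟨f, hF, hf0⟩ : P (Nat.findGreatest P (Fintype.card V)) :=
    Nat.findGreatest_spec (Nat.zero_le _) h0
  refine ⟨f, _, hF, hf0, fun z hz hmiss ↦ ?_⟩
  by_contra! hzf
  have hF' := hF.snoc hz hzf hmiss
  have := Nat.le_findGreatest (P := P) (hbound hF')
    ⟨_, hF', by rw [Function.update_of_ne (by omega), hf0]⟩
  omega

theorem Connected.card_filter_degree_le_one_le_two [Fintype V] [DecidableRel G.Adj]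
    (hG : G.Connected) (h : ∀ v, G.degree v ≤ 2) : #{v | G.degree v ≤ 1} ≤ 2 := by
  have hedges := hG.card_vert_le_card_edgeSet_add_one
  rw [Nat.card_eq_fintype_card, Nat.card_eq_fintype_card, ← edgeFinset_card] at hedges
  have hsum : ∑ v, G.degree v + #{v | G.degree v ≤ 1} ≤ ∑ _v : V, 2 := by
    rw [card_filter, ← sum_add_distrib]
    refine sum_le_sum fun v _ ↦ ?_
    have := h v
    split_ifs <;> omega
  rw [sum_degrees_eq_twice_card_edges, sum_const, card_univ, smul_eq_mul] at hsum
  omega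

theorem not_reachable_of_degree_le_one [Fintype V] [DecidableRel G.Adj]
    (h : ∀ v, G.degree v ≤ 2) {u v w : V} (hu : G.degree u ≤ 1) (hv : G.degree v ≤ 1)
    (hw : G.degree w ≤ 1) (huv : u ≠ v) (huw : u ≠ w) (hvw : v ≠ w)
    (hreach : G.Reachable u v) : ¬ G.Reachable u w := by
  classical
  intro hreach'
  set C := G.connectedComponentMk u
  have hdeg : ∀ a : C.supp, (G.induce C.supp).degree a = G.degree a := fun a ↦
    degree_induce_of_neighborSet_subset fun b hb ↦ C.mem_supp_of_adj_mem_supp a.2 hb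
  have hu' : u ∈ C.supp := rfl
  have hv' : v ∈ C.supp := (ConnectedComponent.eq.2 hreach).symm
  have hw' : w ∈ C.supp := (ConnectedComponent.eq.2 hreach').symm
  have hC : (G.induce C.supp).Connected := C.connected_toSimpleGraph
  have hsub : ({⟨u, hu'⟩, ⟨v, hv'⟩, ⟨w, hw'⟩} : Finset C.supp) ⊆
      ({a | (G.induce C.supp).degree a ≤ 1} : Finset C.supp) := by
    intro a ha
    simp only [mem_insert, mem_singleton] at ha
    rcases ha with rfl | rfl | rfl <;> simpa [hdeg]
  have := (card_le_card hsub).trans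
    (hC.card_filter_degree_le_one_le_two fun a ↦ (hdeg a).trans_le (h a))
  rw [card_insert_of_notMem (by simp [huv, huw]), card_insert_of_notMem (by simp [hvw]),
    card_singleton] at this
  omega

/-- The `γδ`-subgraph, whose connected components are the Kempe chains. -/
def kempeGraph (G : SimpleGraph V) (c : Sym2 V → α) (γ δ : α) : SimpleGraph V where
  Adj v w := G.Adj v w ∧ (c s(v, w) = γ ∨ c s(v, w) = δ)
  symm := ⟨fun _ _ h ↦ ⟨h.1.symm, by rw [Sym2.eq_swap]; exact h.2⟩⟩
  loopless := ⟨fun _ h ↦ h.1.ne rfl⟩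

@[simp]
lemma kempeGraph_adj {v w : V} :
    (G.kempeGraph c γ δ).Adj v w ↔ G.Adj v w ∧ (c s(v, w) = γ ∨ c s(v, w) = δ) :=
  Iff.rfl

section KempeDegree

variable [Fintype V] [DecidableRel (G.kempeGraph c γ δ).Adj] (hc : G.IsProperEdgeColoring c)
  (v : V)
include hc

lemma IsProperEdgeColoring.degree_kempeGraph_le_two : (G.kempeGraph c γ δ).degree v ≤ 2 := by
  classical
  let N : α → Finset V := fun ε ↦ {w | G.Adj v w ∧ c s(v, w) = ε}
  have hN : ∀ ε, #(N ε) ≤ 1 := fun ε ↦ card_le_one.2 fun a ha b hb ↦ by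
    simp only [N, mem_filter, mem_univ, true_and] at ha hb
    exact hc ha.1 hb.1 (ha.2.trans hb.2.symm)
  rw [← card_neighborFinset_eq_degree]
  calc #((G.kempeGraph c γ δ).neighborFinset v) ≤ #(N γ ∪ N δ) := by
        refine card_le_card fun w ↦ ?_
        simp only [N, mem_neighborFinset, kempeGraph_adj, mem_union, mem_filter, mem_univ,
          true_and]
        tauto
    _ ≤ 2 := (card_union_le _ _).trans (by have := hN γ; have := hN δ; omega)

lemma IsProperEdgeColoring.degree_kempeGraph_le_one
    (hv : G.IsMissingColor c v γ ∨ G.IsMissingColor c v δ) :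
    (G.kempeGraph c γ δ).degree v ≤ 1 := by
  classical
  rw [← card_neighborFinset_eq_degree]
  refine card_le_one.2 fun a ha b hb ↦ ?_
  simp only [mem_neighborFinset, kempeGraph_adj] at ha hb
  refine hc ha.1 hb.1 ?_
  rcases hv with hv | hv
  · exact (ha.2.resolve_left (hv ha.1)).trans (hb.2.resolve_left (hv hb.1)).symm
  · exact (ha.2.resolve_right (hv ha.1)).trans (hb.2.resolve_right (hv hb.1)).symm

end KempeDegree

open Classical in
noncomputable def kempeSwap [DecidableEq α] (G : SimpleGraph V) (c : Sym2 V → α) (γ δ : α)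
    (z : V) : Sym2 V → α :=
  fun e ↦ if ∀ v ∈ e, (G.kempeGraph c γ δ).Reachable z v then Equiv.swap γ δ (c e) else c e

section KempeSwap

variable [DecidableEq α] {v : V}

lemma kempeSwap_apply_of_reachable (hv : (G.kempeGraph c γ δ).Reachable z v) {w : V}
    (hw : G.Adj v w) : G.kempeSwap c γ δ z s(v, w) = Equiv.swap γ δ (c s(v, w)) := by
  by_cases hK : (G.kempeGraph c γ δ).Adj v w
  · refine if_pos ?_
    simp only [Sym2.mem_iff, forall_eq_or_imp, forall_eq]
    exact ⟨hv, hv.trans hK.reachable⟩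
  · have : c s(v, w) ≠ γ ∧ c s(v, w) ≠ δ := by simpa [hw, not_or] using hK
    simp only [kempeSwap, Equiv.swap_apply_of_ne_of_ne this.1 this.2, ite_self]

lemma kempeSwap_apply_of_not_reachable (hv : ¬ (G.kempeGraph c γ δ).Reachable z v) (w : V) :
    G.kempeSwap c γ δ z s(v, w) = c s(v, w) :=
  if_neg fun h ↦ hv (h v (Sym2.mem_mk_left v w))

lemma IsProperEdgeColoring.kempeSwap (hc : G.IsProperEdgeColoring c) :
    G.IsProperEdgeColoring (G.kempeSwap c γ δ z) := by
  intro v w w' hw hw' h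
  by_cases hv : (G.kempeGraph c γ δ).Reachable z v
  · rw [kempeSwap_apply_of_reachable hv hw, kempeSwap_apply_of_reachable hv hw'] at h
    exact hc hw hw' ((Equiv.swap γ δ).injective h)
  · rw [kempeSwap_apply_of_not_reachable hv, kempeSwap_apply_of_not_reachable hv] at h
    exact hc hw hw' h

lemma IsMissingColor.kempeSwap_of_reachable (hv : (G.kempeGraph c γ δ).Reachable z v)
    (h : G.IsMissingColor c v (Equiv.swap γ δ ε)) :
    G.IsMissingColor (G.kempeSwap c γ δ z) v ε :=
  fun w hw heq ↦ h hw (by rw [← heq, kempeSwap_apply_of_reachable hv hw, Equiv.swap_apply_self])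

lemma IsMissingColor.kempeSwap_of_not_reachable (hv : ¬ (G.kempeGraph c γ δ).Reachable z v)
    (h : G.IsMissingColor c v ε) : G.IsMissingColor (G.kempeSwap c γ δ z) v ε :=
  fun w hw ↦ by rw [kempeSwap_apply_of_not_reachable hv]; exact h hw

end KempeSwap

namespace IsFan

variable [DecidableEq α] {f : ℕ → V} {m : ℕ}

lemma kempeSwap (hF : G.IsFan c x f m) (hx : ¬ (G.kempeGraph c γ δ).Reachable z x)
    (h : ∀ i < m, (G.kempeGraph c γ δ).Reachable z (f i) →
      c s(x, f (i + 1)) ≠ γ ∧ c s(x, f (i + 1)) ≠ δ) :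
    G.IsFan (G.kempeSwap c γ δ z) x f m where
  injOn := hF.injOn
  not_adj_zero := hF.not_adj_zero
  adj_succ := hF.adj_succ
  isMissingColor i hi := by
    rw [kempeSwap_apply_of_not_reachable hx]
    by_cases hr : (G.kempeGraph c γ δ).Reachable z (f i)
    · refine IsMissingColor.kempeSwap_of_reachable hr ?_
      rw [Equiv.swap_apply_of_ne_of_ne (h i hi hr).1 (h i hi hr).2]
      exact hF.isMissingColor i hi
    · exact (hF.isMissingColor i hi).kempeSwap_of_not_reachable hr

/-- Swapping the Kempe chain through the tip makes `γ` missing there; the fan survives because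
the colours at `x` are untouched, and the rotation then uses `γ`. -/
theorem exists_isProperEdgeColoring_sup_edge_of_not_reachable (hF : G.IsFan c x f m)
    (hc : G.IsProperEdgeColoring c) (hγ : G.IsMissingColor c x γ)
    (hδ : G.IsMissingColor c (f m) δ) (hx : ¬ (G.kempeGraph c γ δ).Reachable (f m) x)
    (h : ∀ i < m, (G.kempeGraph c γ δ).Reachable (f m) (f i) → c s(x, f (i + 1)) ≠ δ) :
    ∃ c' : Sym2 V → α, (G ⊔ edge x (f 0)).IsProperEdgeColoring c' :=
  (hF.kempeSwap hx fun i hi hr ↦ ⟨hγ (hF.adj_succ i hi), h i hi hr⟩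
    ).exists_isProperEdgeColoring_sup_edge hc.kempeSwap (hγ.kempeSwap_of_not_reachable hx)
    (IsMissingColor.kempeSwap_of_reachable .rfl (by rw [Equiv.swap_apply_left]; exact hδ))

end IsFan

theorem IsProperEdgeColoring.exists_sup_edge_of_degree_lt [Fintype V] [Fintype α]
    [DecidableRel G.Adj] (hc : G.IsProperEdgeColoring c)
    (hdeg : ∀ v, G.degree v < Fintype.card α) (hxy : ¬ G.Adj x y) :
    ∃ c' : Sym2 V → α, (G ⊔ edge x y).IsProperEdgeColoring c' := by
  classical
  rcases eq_or_ne x y with rfl | hne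
  · exact ⟨c, by rwa [sup_edge_self]⟩
  obtain ⟨f, N, hF, rfl, hmax⟩ := exists_maximal_isFan c hxy
  obtain ⟨δ, hδ⟩ := exists_isMissingColor_of_degree_lt c (hdeg (f N))
  by_cases hδx : G.IsMissingColor c x δ
  · exact hF.exists_isProperEdgeColoring_sup_edge hc hδx hδ
  obtain ⟨z, hz, hzδ⟩ : ∃ z, G.Adj x z ∧ c s(x, z) = δ := by simpa [IsMissingColor] using hδx
  obtain ⟨j, hj, rfl⟩ := hmax z hz (hzδ ▸ hδ)
  obtain ⟨i, rfl⟩ : ∃ i, j = i + 1 :=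
    Nat.exists_eq_add_one.2 (Nat.pos_of_ne_zero (by rintro rfl; exact hF.not_adj_zero hz))
  have hδi : G.IsMissingColor c (f i) δ := hzδ ▸ hF.isMissingColor i (by omega)
  have hδ_unique : ∀ k < N, c s(x, f (k + 1)) = δ → k = i := fun k hk h ↦ by
    have := hF.injOn (Set.mem_Iic.2 (by omega)) (Set.mem_Iic.2 hj)
      (hc (hF.adj_succ k hk) hz (h.trans hzδ.symm))
    omega
  have hxf : ∀ k ≤ N, x ≠ f k
    | 0, _ => hne
    | k + 1, hk => (hF.adj_succ k (by omega)).ne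
  obtain ⟨γ, hγ⟩ := exists_isMissingColor_of_degree_lt c (hdeg x)
  by_cases hreach : (G.kempeGraph c γ δ).Reachable x (f i)
  · have hN : ¬ (G.kempeGraph c γ δ).Reachable x (f N) :=
      not_reachable_of_degree_le_one hc.degree_kempeGraph_le_two
        (hc.degree_kempeGraph_le_one x (.inl hγ)) (hc.degree_kempeGraph_le_one (f i) (.inr hδi))
        (hc.degree_kempeGraph_le_one (f N) (.inr hδ)) (hxf i (by omega)) (hxf N le_rfl)
        (hF.apply_ne_apply (by omega) le_rfl (by omega)) hreach
    refine hF.exists_isProperEdgeColoring_sup_edge_of_not_reachable hc hγ hδ (fun h ↦ hN h.symm)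
      fun k hk hr hkδ ↦ hN (hreach.trans ?_)
    rw [← hδ_unique k hk hkδ]
    exact hr.symm
  · exact (hF.of_le (by omega)).exists_isProperEdgeColoring_sup_edge_of_not_reachable hc hγ hδi
      (fun h ↦ hreach h.symm) fun k hk _ hkδ ↦ by have := hδ_unique k (by omega) hkδ; omega

theorem exists_isProperEdgeColoring_of_degree_lt [Fintype V] [Fintype α] (G : SimpleGraph V)
    [DecidableRel G.Adj] (h : ∀ v, G.degree v < Fintype.card α) :
    ∃ c : Sym2 V → α, G.IsProperEdgeColoring c := by
  classical
  rcases isEmpty_or_nonempty α with hα | ⟨⟨γ⟩⟩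
  · have : IsEmpty V := ⟨fun v ↦ by simpa using h v⟩
    exact ⟨isEmptyElim, fun v ↦ isEmptyElim v⟩
  suffices ∀ H ≤ G, ∃ c : Sym2 V → α, H.IsProperEdgeColoring c from this G le_rfl
  intro H hH
  induction H using WellFoundedLT.induction with
  | ind H ih =>
    by_cases hE : ∃ x y, H.Adj x y
    · obtain ⟨x, y, hxy⟩ := hE
      have hH' : H \ edge x y ⊔ edge x y = H := sdiff_sup_cancel ((edge_le_iff H).2 (.inr hxy))
      have hnadj : ¬ (H \ edge x y).Adj x y := by simp [edge_adj, hxy.ne]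
      obtain ⟨c, hc⟩ := ih _ (hH' ▸ lt_sup_edge _ _ _ hxy.ne hnadj) (sdiff_le.trans hH)
      rw [← hH']
      exact hc.exists_sup_edge_of_degree_lt
        (fun v ↦ (degree_le_of_le (sdiff_le.trans hH)).trans_lt (h v)) hnadj
    · simp only [not_exists] at hE
      exact ⟨fun _ ↦ γ, fun v w _ hw ↦ (hE v w hw).elim⟩

def IsProperEdgeColoring.lineGraphColoring (hc : G.IsProperEdgeColoring c) :
    G.lineGraph.Coloring α :=
  Coloring.mk (fun e ↦ c e) fun {e₁ e₂} h ↦ by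
    obtain ⟨hne, v, hv₁, hv₂⟩ := lineGraph_adj_iff_exists.1 h
    obtain ⟨a, ha⟩ := Sym2.mem_iff_exists.1 hv₁
    obtain ⟨b, hb⟩ := Sym2.mem_iff_exists.1 hv₂
    have hva : G.Adj v a := by rw [← mem_edgeSet, ← ha]; exact e₁.2
    have hvb : G.Adj v b := by rw [← mem_edgeSet, ← hb]; exact e₂.2
    intro hcol
    refine hne (Subtype.ext ?_)
    rw [ha, hb, hc hva hvb (by rwa [← ha, ← hb])]

end SimpleGraph

/-- **Vizing's theorem.** For every finite simple graph `G`, the chromatic index of `G`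
(the chromatic number of its line graph) is at most `Δ(G) + 1`. -/
theorem vizing_chromatic_index_le {V : Type*} [Fintype V] (G : SimpleGraph V)
    [DecidableRel G.Adj] :
    (G.lineGraph).chromaticNumber ≤ (G.maxDegree : ℕ∞) + 1 := by
  obtain ⟨c, hc⟩ := G.exists_isProperEdgeColoring_of_degree_lt (α := Fin (G.maxDegree + 1))
    fun v ↦ by simpa [Nat.lt_succ_iff] using G.degree_le_maxDegree v
  simpa using hc.lineGraphColoring.colorable.chromaticNumber_le
end

section
/- For every odd natural number n ≥ 3, the chromatic index of the complete graph K_n on n vertices equals n. -/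
/-!
Colouring the edge `{a, b}` of `K_n` by `a + b` in `ℤ/nℤ` is proper, since `a + v = b + v`
forces `a = b`; so `n` colours suffice. Conversely, every colour class is a matching, so for odd
`n = 2k + 1` it has at most `k` edges, while `K_n` has `n * k` edges.
-/

open Finset

namespace SimpleGraph

variable {V : Type*} {G : SimpleGraph V}

theorem two_mul_card_le_of_isIndepSet_lineGraph [Fintype V] [DecidableEq V] {s : Finset G.edgeSet}
    (hs : G.lineGraph.IsIndepSet (s : Set G.edgeSet)) : 2 * #s ≤ Fintype.card V := by
  have hdisj : (s : Set G.edgeSet).PairwiseDisjoint fun e => (e : Sym2 V).toFinset := by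
    intro e he e' he' hne
    refine Finset.disjoint_left.2 fun v hv hv' => hs he he' hne ?_
    exact lineGraph_adj_iff_exists.2 ⟨hne, v, Sym2.mem_toFinset.1 hv, Sym2.mem_toFinset.1 hv'⟩
  calc 2 * #s = ∑ e ∈ s, #(e : Sym2 V).toFinset := by
        rw [sum_congr rfl fun e _ =>
            Sym2.card_toFinset_of_not_isDiag _ (G.not_isDiag_of_mem_edgeSet e.2),
          sum_const, smul_eq_mul, mul_comm]
    _ = #(s.biUnion fun e => (e : Sym2 V).toFinset) := (card_biUnion hdisj).symm
    _ ≤ Fintype.card V := card_le_univ _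

theorem Colorable.card_edgeFinset_le_of_lineGraph [Fintype V] [DecidableEq V] [Fintype G.edgeSet]
    {m : ℕ} (h : G.lineGraph.Colorable m) : #G.edgeFinset ≤ Fintype.card V / 2 * m := by
  classical
  obtain ⟨C⟩ := h
  have hclass : ∀ c : Fin m, #{e : G.edgeSet | C e = c} ≤ Fintype.card V / 2 := fun c =>
    (Nat.le_div_iff_mul_le two_pos).2 <| by
      rw [mul_comm]
      refine two_mul_card_le_of_isIndepSet_lineGraph fun e he e' he' _ hadj => C.valid hadj ?_
      simp only [coe_filter, mem_univ, true_and, Set.mem_ofPred_eq] at he he'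
      rw [he, he']
  calc #G.edgeFinset = #(univ : Finset G.edgeSet) := by rw [card_univ, edgeFinset_card]
    _ ≤ Fintype.card V / 2 * #(univ : Finset (Fin m)) :=
        card_le_mul_card_image_of_maps_to (fun e _ => mem_univ (C e)) _ fun c _ => hclass c
    _ = Fintype.card V / 2 * m := by rw [card_univ, Fintype.card_fin]

def lineGraphTopAddColoring (α : Type*) [AddCancelCommMonoid α] :
    (⊤ : SimpleGraph α).lineGraph.Coloring α :=
  Coloring.mk (fun e => Sym2.lift ⟨fun a b => a + b, add_comm⟩ e) fun hadj => by
    obtain ⟨hne, v, hv₁, hv₂⟩ := lineGraph_adj_iff_exists.1 hadj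
    obtain ⟨a, ha⟩ := Sym2.mem_iff_exists.1 hv₁
    obtain ⟨b, hb⟩ := Sym2.mem_iff_exists.1 hv₂
    intro hcol
    simp only [ha, hb, Sym2.lift_mk, add_right_inj] at hcol
    exact hne (Subtype.ext (by rw [ha, hb, hcol]))

theorem lineGraph_top_colorable_card (α : Type*) [AddCancelCommMonoid α] [Fintype α] :
    (⊤ : SimpleGraph α).lineGraph.Colorable (Fintype.card α) :=
  (lineGraphTopAddColoring α).colorable

end SimpleGraph

open SimpleGraph in
/-- For every odd `n ≥ 3`, the chromatic index of the complete graph `K_n`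
(the chromatic number of its line graph) equals `n`. -/
theorem chromatic_index_complete_odd (n : ℕ) (hn : 3 ≤ n) (ho : Odd n) :
    ((⊤ : SimpleGraph (Fin n)).lineGraph).chromaticNumber = (n : ℕ∞) := by
  have : NeZero n := ⟨by omega⟩
  refine le_antisymm ?_ (le_chromaticNumber_iff_colorable.2 fun m hm => ?_)
  · simpa using chromaticNumber_le_iff_colorable.2 (lineGraph_top_colorable_card (Fin n))
  obtain ⟨k, rfl⟩ := ho
  have hedges : #(⊤ : SimpleGraph (Fin (2 * k + 1))).edgeFinset = (2 * k + 1) * k := by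
    rw [card_edgeFinset_top_eq_card_choose_two, Fintype.card_fin, Nat.choose_two_right,
      Nat.add_sub_cancel, mul_left_comm, Nat.mul_div_cancel_left _ two_pos]
  have hbound := hm.card_edgeFinset_le_of_lineGraph
  rw [hedges, Fintype.card_fin, show (2 * k + 1) / 2 = k by omega, mul_comm (2 * k + 1)] at hbound
  exact_mod_cast Nat.le_of_mul_le_mul_left hbound (by omega : 0 < k)
end

section
/- For every even natural number n ≥ 2, the edge set of the complete graph K_n on n vertices can be partitioned into n − 1 perfect matchings (a round-robin schedule: n − 1 rounds in which every vertex plays exactly once per round). -/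
/-! Label the vertices of `K_{m+1}`, `m = n - 1` odd, by `ZMod m` together with an extra vertex
`∞`, and colour the edge `{a, b}` by `a + b` and the edge `{a, ∞}` by `2 * a`. At a vertex `a`
the colour `c` is carried by the edge to `c - a` when `c ≠ 2 * a`, and by the edge to `∞`
otherwise; at `∞` it is carried by the edge to `c / 2`, which exists and is unique because `2`
is invertible modulo the odd number `m`. So every colour class is a perfect matching. -/

open Function

/-- A 1-factorization of the complete graph on `V`, encoded as an edge colouring whose colour
classes are the factors; the colours of diagonal elements of `Sym2 V` play no role. -/
def IsOneFactorization {V C : Type*} (col : Sym2 V → C) : Prop :=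
  ∀ v c, ∃! x, x ≠ v ∧ col s(v, x) = c

namespace IsOneFactorization

variable {V W C D : Type*} {col : Sym2 W → C}

theorem comp_sym2_map (h : IsOneFactorization col) (e : V ≃ W) :
    IsOneFactorization (col ∘ Sym2.map e) := by
  intro v c
  obtain ⟨y, ⟨hyv, hyc⟩, hy⟩ := h (e v) c
  refine ⟨e.symm y, ⟨?_, by simpa using hyc⟩, fun x ⟨hxv, hxc⟩ => ?_⟩
  · simpa [Equiv.symm_apply_eq] using hyv
  · rw [Equiv.eq_symm_apply]
    exact hy (e x) ⟨e.injective.ne hxv, by simpa using hxc⟩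

theorem equiv_comp (h : IsOneFactorization col) (σ : C ≃ D) :
    IsOneFactorization (σ ∘ col) := by
  intro v c
  simpa only [comp_apply, ← Equiv.eq_symm_apply] using h v (σ.symm c)

end IsOneFactorization

section ColorClass

variable {V C : Type*}

def colorClass (col : Sym2 V → C) (c : C) : Set (Sym2 V) :=
  (⊤ : SimpleGraph V).edgeSet ∩ col ⁻¹' {c}

theorem colorClass_subset_edgeSet (col : Sym2 V → C) (c : C) :
    colorClass col c ⊆ (⊤ : SimpleGraph V).edgeSet :=
  Set.inter_subset_left

theorem pairwise_disjoint_colorClass (col : Sym2 V → C) :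
    Pairwise fun c d => Disjoint (colorClass col c) (colorClass col d) := fun _ _ hcd =>
  ((Set.disjoint_singleton.2 hcd).preimage col).mono Set.inter_subset_right Set.inter_subset_right

theorem iUnion_colorClass (col : Sym2 V → C) :
    ⋃ c, colorClass col c = (⊤ : SimpleGraph V).edgeSet := by
  simp only [colorClass, ← Set.inter_iUnion, ← Set.preimage_iUnion, Set.iUnion_of_singleton,
    Set.preimage_univ, Set.inter_univ]

variable {col : Sym2 V → C}

theorem IsOneFactorization.eq_of_mem_colorClass (h : IsOneFactorization col) {c : C} {e f : Sym2 V}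
    (he : e ∈ colorClass col c) (hf : f ∈ colorClass col c) {v : V} (hve : v ∈ e) (hvf : v ∈ f) :
    e = f := by
  obtain ⟨x, rfl⟩ := Sym2.mem_iff_exists.1 hve
  obtain ⟨y, rfl⟩ := Sym2.mem_iff_exists.1 hvf
  obtain ⟨hvx, hx⟩ := he
  obtain ⟨hvy, hy⟩ := hf
  rw [SimpleGraph.mem_edgeSet, SimpleGraph.top_adj] at hvx hvy
  rw [(h v c).unique ⟨hvx.symm, hx⟩ ⟨hvy.symm, hy⟩]

theorem IsOneFactorization.exists_mem_colorClass (h : IsOneFactorization col) (c : C) (v : V) :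
    ∃ e ∈ colorClass col c, v ∈ e := by
  obtain ⟨x, ⟨hxv, hx⟩, -⟩ := h v c
  exact ⟨s(v, x), ⟨(SimpleGraph.top_adj v x).2 hxv.symm, hx⟩, Sym2.mem_mk_left v x⟩

end ColorClass

section RoundRobin

variable {R : Type*} [Ring R]

def roundRobinColor : Option R → Option R → R
  | some a, some b => a + b
  | some a, none | none, some a => 2 * a
  | none, none => 0

theorem roundRobinColor_comm (x y : Option R) : roundRobinColor x y = roundRobinColor y x := by
  cases x <;> cases y <;> simp [roundRobinColor, add_comm]

def roundRobinColoring : Sym2 (Option R) → R :=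
  Sym2.lift ⟨roundRobinColor, roundRobinColor_comm⟩

theorem isOneFactorization_roundRobinColoring (h2 : IsUnit (2 : R)) :
    IsOneFactorization (roundRobinColoring (R := R)) := by
  rintro (_ | a) c
  · obtain ⟨b, rfl⟩ := Even.of_isUnit_two h2 c
    refine ⟨some b, ⟨Option.some_ne_none b, two_mul b⟩, ?_⟩
    rintro (_ | b') ⟨hne, hc⟩
    · exact absurd rfl hne
    · rw [h2.mul_left_cancel (hc.trans (two_mul b).symm)]
  · by_cases hc : c = 2 * a
    · refine ⟨none, ⟨Option.some_ne_none a |>.symm, hc.symm⟩, ?_⟩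
      rintro (_ | b) ⟨hne, hb⟩
      · rfl
      · change a + b = c at hb
        refine absurd ?_ hne
        rw [← add_left_cancel (hb.trans (hc.trans (two_mul a)))]
    · refine ⟨some (c - a), ⟨?_, add_sub_cancel a c⟩, ?_⟩
      · exact fun h => hc ((sub_eq_iff_eq_add.1 (Option.some_injective _ h)).trans (two_mul a).symm)
      · rintro (_ | b) ⟨-, hb⟩
        · exact absurd hb.symm hc
        · change a + b = c at hb
          rw [← hb, add_sub_cancel_left]

end RoundRobin

theorem exists_isOneFactorization_fin {n : ℕ} (hn : 2 ≤ n) (he : Even n) :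
    ∃ col : Sym2 (Fin n) → Fin (n - 1), IsOneFactorization col := by
  set m := n - 1
  have : NeZero m := ⟨by omega⟩
  have h2 : IsUnit (2 : ZMod m) := by
    have hodd : Odd m := Nat.Even.sub_odd (by omega) he odd_one
    simpa using (ZMod.unitOfCoprime 2 (Nat.coprime_two_left.2 hodd)).isUnit
  let vertices : Fin n ≃ Option (ZMod m) :=
    Fintype.equivOfCardEq (by rw [Fintype.card_fin, Fintype.card_option, ZMod.card]; omega)
  let colors : ZMod m ≃ Fin m := (ZMod.finEquiv m).toEquiv.symm
  exact ⟨_, ((isOneFactorization_roundRobinColoring h2).comp_sym2_map vertices).equiv_comp colors⟩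

/-- For every even `n ≥ 2`, the edge set of the complete graph `K_n` can be partitioned
into `n - 1` perfect matchings: sets of edges no two of which share an endpoint, in which
every vertex is covered, that are pairwise disjoint, and whose union is the whole edge set. -/
theorem complete_graph_round_robin (n : ℕ) (hn : 2 ≤ n) (he : Even n) :
    ∃ M : Fin (n - 1) → Set (Sym2 (Fin n)),
      (∀ i, M i ⊆ (⊤ : SimpleGraph (Fin n)).edgeSet) ∧
      (∀ i, ∀ e ∈ M i, ∀ f ∈ M i, e ≠ f → ∀ v : Fin n, ¬(v ∈ e ∧ v ∈ f)) ∧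
      (∀ i, ∀ v : Fin n, ∃ e ∈ M i, v ∈ e) ∧
      (Pairwise fun i j => Disjoint (M i) (M j)) ∧
      (⋃ i, M i) = (⊤ : SimpleGraph (Fin n)).edgeSet := by
  obtain ⟨col, hcol⟩ := exists_isOneFactorization_fin hn he
  refine ⟨colorClass col, colorClass_subset_edgeSet col, ?_, hcol.exists_mem_colorClass,
    pairwise_disjoint_colorClass col, iUnion_colorClass col⟩
  rintro i e he f hf hef v ⟨hve, hvf⟩
  exact hef (hcol.eq_of_mem_colorClass he hf hve hvf)
end
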